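/- Two-point stationary states, decoupled case, part (a): assume D^{(12)} = 0 and fix i ∈ {1,2}. (i) If D^{(ii)} = 0, then v^{(i)}_{12} = 0 for every two-species distribution ρ. (ii) If D^{(ii)} ≠ 0, then for a two-species distribution ρ one has v^{(i)}_{12} = 0 if and only if ρ^{(i)}(x_1) = ρ^{(i)}(x_2) = 1/2. -/
import Mathlib


open Finset

/-- The velocity `v^{(i)}_{ικ}` on the two-point space; `ρ k l` denotes the vertex *mass*
`ρ^{(k)}(x_l)`, so that `∑_λ (ΔK) ρ^{(k)}_λ μ_λ = ∑_l (ΔK) ρ k l`. -/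
noncomputable def vel2 {d : ℕ} (x : Fin 2 → EuclideanSpace ℝ (Fin d))
    (K : Fin 2 → Fin 2 → EuclideanSpace ℝ (Fin d) → EuclideanSpace ℝ (Fin d) → ℝ)
    (ρ : Fin 2 → Fin 2 → ℝ) (i ι κ : Fin 2) : ℝ :=
  ∑ k : Fin 2, ∑ l : Fin 2, (K i k (x ι) (x l) - K i k (x κ) (x l)) * ρ k l

/-- A two-species distribution on the two-point space, in terms of the vertex masses. -/
def IsDist2 (ρ : Fin 2 → Fin 2 → ℝ) : Prop :=
  (∀ i ι, 0 ≤ ρ i ι) ∧ ∀ i, ρ i 0 + ρ i 1 = 1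

/-- Proposition 3.4 a) (decoupled case): if `D^{(12)} = 0` then, for species `i`,
`D^{(ii)} = 0` forces `v^{(i)}_{12} = 0` for every distribution, while for `D^{(ii)} ≠ 0`
the velocity vanishes exactly at the uniform distribution of species `i`. -/
theorem two_point_stationary_decoupled_a
    (d : ℕ) (x : Fin 2 → EuclideanSpace ℝ (Fin d)) (hx : x 0 ≠ x 1)
    (μ : Fin 2 → ℝ) (hμ : ∀ ι, 0 < μ ι)
    (η12 : ℝ) (hη : 0 < η12)
    (K : Fin 2 → Fin 2 → EuclideanSpace ℝ (Fin d) → EuclideanSpace ℝ (Fin d) → ℝ)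
    (hKsym : ∀ i k p q, K i k p q = K i k q p)
    (hK12 : ∀ p q, K 0 1 p q = K 1 0 p q)
    (hKdiag : ∀ i k : Fin 2, ∀ p q : EuclideanSpace ℝ (Fin d), K i k p p = K i k q q)
    (D : Fin 2 → Fin 2 → ℝ)
    (hD : ∀ i k, D i k = K i k (x 0) (x 0) - K i k (x 0) (x 1))
    (hD12 : D 0 1 = 0)
    (i : Fin 2) :
    (D i i = 0 → ∀ ρ, IsDist2 ρ → vel2 x K ρ i 0 1 = 0) ∧
    (D i i ≠ 0 → ∀ ρ, IsDist2 ρ →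
      (vel2 x K ρ i 0 1 = 0 ↔ ρ i 0 = 1 / 2 ∧ ρ i 1 = 1 / 2)) := by

  have key : ∀ ρ : Fin 2 → Fin 2 → ℝ, vel2 x K ρ i 0 1 = D i i * (ρ i 0 - ρ i 1) := by
    intro ρ
    have term : ∀ k : Fin 2,
        (K i k (x 0) (x 0) - K i k (x 1) (x 0)) * ρ k 0 +
        (K i k (x 0) (x 1) - K i k (x 1) (x 1)) * ρ k 1
          = D i k * (ρ k 0 - ρ k 1) := by
      intro k
      rw [hKsym i k (x 1) (x 0), hKdiag i k (x 1) (x 0), hD i k]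
      ring
    have hD10 : D 1 0 = 0 := by
      rw [hD 1 0, ← hK12, ← hK12, ← hD 0 1]; exact hD12
    have : vel2 x K ρ i 0 1
        = D i 0 * (ρ 0 0 - ρ 0 1) + D i 1 * (ρ 1 0 - ρ 1 1) := by
      simp only [vel2, Fin.sum_univ_two]
      rw [term 0, term 1]
    rw [this]
    fin_cases i <;> simp only [Fin.zero_eta, Fin.mk_one, Fin.isValue]
    · rw [hD12]; ring
    · rw [hD10]; ring
  constructor
  · intro h0 ρ hρ
    rw [key ρ, h0, zero_mul]
  · intro hne ρ hρ
    rw [key ρ]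
    constructor
    · intro h
      have h2 : ρ i 0 - ρ i 1 = 0 := by
        rcases mul_eq_zero.mp h with h | h
        · exact absurd h hne
        · exact h
      have h3 := hρ.2 i
      constructor <;> linarith
    · rintro ⟨h1, h2⟩
      rw [h1, h2]; ring
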